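/- Let f, g : K → 𝕋 be continuous maps from the Sierpinski gasket to the circle. Then f and g are homotopic (i.e., there exists a continuous F : [0,1] × K → 𝕋 with F(0,·) = f and F(1,·) = g) if and only if ω_w(f) = ω_w(g) for every word w ∈ ⋃_{n≥0} {1,2,3}^n (including the empty word). -/

import Mathlib

open Filter
open scoped ENNReal

noncomputable section

/-- Vertices of the base triangle. -/
def sgv1 : ℝ × ℝ := (0, 0)
def sgv2 : ℝ × ℝ := (1/2, Real.sqrt 3 / 2)
def sgv3 : ℝ × ℝ := (1, 0)

def sgvtx : Fin 3 → ℝ × ℝ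
  | 0 => sgv1
  | 1 => sgv2
  | 2 => sgv3

/-- The contraction `F_i(x) = (x - v_i)/2 + v_i = (x + v_i)/2`. -/
def sgF (i : Fin 3) (x : ℝ × ℝ) : ℝ × ℝ := (1/2 : ℝ) • (x + sgvtx i)

/-- `F_w = F_{w₁} ∘ ⋯ ∘ F_{wₙ}` (empty word gives the identity). -/
def sgFw (w : List (Fin 3)) : ℝ × ℝ → ℝ × ℝ :=
  w.foldr (fun i g => sgF i ∘ g) id

instance : DecidableEq (ℝ × ℝ) := Classical.decEq _

/-- The vertex sets `Vₙ`. -/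
def sgV : ℕ → Finset (ℝ × ℝ)
  | 0 => {sgv1, sgv2, sgv3}
  | n + 1 => Finset.univ.biUnion fun i : Fin 3 => (sgV n).image (sgF i)

/-- Adjacency on `Γₙ`: distinct points lying in a common image `F_w(V₀)`, `|w| = n`. -/
def sgAdj (n : ℕ) (x y : ℝ × ℝ) : Prop :=
  x ≠ y ∧ ∃ w : List (Fin 3), w.length = n ∧
    x ∈ (sgV 0).image (sgFw w) ∧ y ∈ (sgV 0).image (sgFw w)

open Classical in
/-- Discrete Dirichlet energy `ℰₙ` (each undirected edge counted once: we sum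
over ordered pairs and halve). -/
def sgE (n : ℕ) (f : ℝ × ℝ → ℝ) : ℝ :=
  (5/3 : ℝ) ^ n * ((1:ℝ)/2) *
    ∑ x ∈ sgV n, ∑ y ∈ sgV n, if sgAdj n x y then (f y - f x) ^ 2 / 2 else 0

open Classical in
/-- Discrete Kuramoto energy `𝒥ₙ` (each undirected edge counted once). -/
def sgJ (n : ℕ) (f : ℝ × ℝ → ℝ) : ℝ :=
  (5/3 : ℝ) ^ n * (1 / (4 * Real.pi ^ 2)) * ((1:ℝ)/2) *
    ∑ x ∈ sgV n, ∑ y ∈ sgV n,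
      if sgAdj n x y then 1 - Real.cos (2 * Real.pi * (f y - f x)) else 0

open Classical in
/-- Discrete Laplacian `Δₘ`. -/
def sgLap (m : ℕ) (f : ℝ × ℝ → ℝ) (x : ℝ × ℝ) : ℝ :=
  (5/3 : ℝ) ^ m * ∑ y ∈ sgV m, if sgAdj m x y then f y - f x else 0

/-- `ℰ(f) = supₙ ℰₙ(f) ∈ [0,∞]`. -/
def sgEtot (f : ℝ × ℝ → ℝ) : ℝ≥0∞ :=
  ⨆ n : ℕ, ENNReal.ofReal (sgE n f)

/-- The circle `𝕋 = ℝ/ℤ`. -/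
abbrev 𝕋c := AddCircle (1 : ℝ)

/-- `HasWinding c k`: the loop `c : [0,1] → 𝕋` admits a continuous lift `ĉ` with
`ĉ(1) - ĉ(0) = k`. -/
def HasWinding (c : ℝ → 𝕋c) (k : ℤ) : Prop :=
  ∃ ch : ℝ → ℝ, ContinuousOn ch (Set.Icc 0 1) ∧
    (∀ t ∈ Set.Icc (0:ℝ) 1, ((ch t : ℝ) : 𝕋c) = c t) ∧ ch 1 - ch 0 = (k : ℝ)

/-- Constant-speed clockwise parametrization of `∂T` starting at the leftmost
vertex `v₁`, passing through `v₂` and then `v₃`. -/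
def sgc0 (t : ℝ) : ℝ × ℝ :=
  if t ≤ 1/3 then sgv1 + (3 * t) • (sgv2 - sgv1)
  else if t ≤ 2/3 then sgv2 + (3 * t - 1) • (sgv3 - sgv2)
  else sgv3 + (3 * t - 2) • (sgv1 - sgv3)

/-- Constant-speed clockwise parametrization of `∂T_w` starting at its leftmost
vertex `F_w(v₁)`. -/
def sgcw (w : List (Fin 3)) (t : ℝ) : ℝ × ℝ := sgFw w (sgc0 t)


instance : Fact ((0:ℝ) < 1) := ⟨one_pos⟩

/-- `cos(2πθ)` for `θ ∈ 𝕋` (well defined via any representative). -/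
def cosT (θ : 𝕋c) : ℝ :=
  Real.cos (2 * Real.pi * ((AddCircle.equivIco 1 0 θ : ℝ)))

open Classical in
/-- The `𝕋`-valued Kuramoto energy `𝒥ₙ` (each undirected edge counted once). -/
def sgJT (n : ℕ) (u : ℝ × ℝ → 𝕋c) : ℝ :=
  (5/3 : ℝ) ^ n * (1 / (4 * Real.pi ^ 2)) * ((1:ℝ)/2) *
    ∑ x ∈ sgV n, ∑ y ∈ sgV n,
      if sgAdj n x y then 1 - cosT (u y - u x) else 0

/-!
A homotopy from `f` to `g` restricts along each boundary loop `c_w` to a homotopy of loops in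
`𝕋`, and winding numbers are invariant under homotopy of loops. Conversely, if the winding numbers
agree, then `h = g - f` has winding number `0` along every `c_w`, and such an `h` lifts to a
continuous `H : K → ℝ`: on small cells `h` has small oscillation and lifts directly, and lifts on
the three subcells `F_{w1}(K), F_{w2}(K), F_{w3}(K)` of a cell, which meet pairwise in a single
point, can be shifted by integers so as to agree at these three points, the obstruction being
exactly the winding number of `h ∘ c_w`. Then `F (s, x) = f x + s H(x)` is the homotopy.
-/

open Set

def IsLiftOn {X : Type*} [TopologicalSpace X] (L : X → ℝ) (u : X → 𝕋c) (S : Set X) : Prop :=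
  ContinuousOn L S ∧ ∀ x ∈ S, (L x : 𝕋c) = u x

lemma exists_intCast_eq_sub_of_coe_eq {x y : ℝ} (h : (x : 𝕋c) = y) : ∃ n : ℤ, x - y = n := by
  obtain ⟨n, hn⟩ := (AddCircle.coe_eq_zero_iff (1 : ℝ) (x := x - y)).1 (by
    rw [AddCircle.coe_sub, h, sub_self])
  exact ⟨n, by simpa using hn.symm⟩

namespace IsLiftOn

variable {X Y : Type*} [TopologicalSpace X] [TopologicalSpace Y] {L L' : X → ℝ} {u u' : X → 𝕋c}
  {S : Set X}

lemma mono (hL : IsLiftOn L u S) {T : Set X} (hTS : T ⊆ S) : IsLiftOn L u T :=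
  ⟨hL.1.mono hTS, fun x hx => hL.2 x (hTS hx)⟩

lemma congr (hL : IsLiftOn L u S) (h : EqOn u u' S) : IsLiftOn L u' S :=
  ⟨hL.1, fun x hx => (hL.2 x hx).trans (h hx)⟩

lemma comp (hL : IsLiftOn L u S) {γ : Y → X} {T : Set Y} (hγ : ContinuousOn γ T)
    (hmaps : MapsTo γ T S) : IsLiftOn (L ∘ γ) (u ∘ γ) T :=
  ⟨hL.1.comp hγ hmaps, fun _ ht => hL.2 _ (hmaps ht)⟩

lemma image_of_leftInverse {F : X → Y} {G : Y → X} {φ : Y → 𝕋c} (hL : IsLiftOn L (φ ∘ F) S)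
    (hG : Continuous G) (hGF : Function.LeftInverse G F) : IsLiftOn (L ∘ G) φ (F '' S) := by
  refine ⟨hL.1.comp hG.continuousOn ?_, ?_⟩
  · rintro _ ⟨x, hx, rfl⟩
    simpa [hGF x] using hx
  · rintro _ ⟨x, hx, rfl⟩
    simpa [hGF x] using hL.2 x hx

lemma add (hL : IsLiftOn L u S) (hL' : IsLiftOn L' u' S) :
    IsLiftOn (fun x => L x + L' x) (fun x => u x + u' x) S :=
  ⟨hL.1.add hL'.1, fun x hx => by rw [AddCircle.coe_add, hL.2 x hx, hL'.2 x hx]⟩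

lemma sub (hL : IsLiftOn L u S) (hL' : IsLiftOn L' u' S) :
    IsLiftOn (fun x => L x - L' x) (fun x => u x - u' x) S :=
  ⟨hL.1.sub hL'.1, fun x hx => by rw [AddCircle.coe_sub, hL.2 x hx, hL'.2 x hx]⟩

lemma add_intCast (hL : IsLiftOn L u S) (n : ℤ) : IsLiftOn (fun x => L x + n) u S :=
  ⟨hL.1.add continuousOn_const, fun x hx => by
    rw [AddCircle.coe_add, hL.2 x hx, (AddCircle.coe_eq_zero_iff 1).2 ⟨n, by simp⟩, add_zero]⟩

lemma exists_intCast_eq_sub (hL : IsLiftOn L u S) (hL' : IsLiftOn L' u S) {x : X} (hx : x ∈ S) :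
    ∃ n : ℤ, L x - L' x = n :=
  exists_intCast_eq_sub_of_coe_eq ((hL.2 x hx).trans (hL'.2 x hx).symm)

lemma eqOn_of_isPreconnected (hL : IsLiftOn L u S) (hL' : IsLiftOn L' u S) (hS : IsPreconnected S)
    {x : X} (hx : x ∈ S) (hxx : L x = L' x) : EqOn L L' S :=
  (AddCircle.isCoveringMap_coe 1).eqOn_of_comp_eqOn hS hL.1 hL'.1
    (fun y hy => (hL.2 y hy).trans (hL'.2 y hy).symm) hx hxx

lemma sub_eq_sub_of_isPreconnected (hL : IsLiftOn L u S) (hL' : IsLiftOn L' u S)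
    (hS : IsPreconnected S) {x y : X} (hx : x ∈ S) (hy : y ∈ S) : L x - L' x = L y - L' y := by
  obtain ⟨n, hn⟩ := hL.exists_intCast_eq_sub hL' hy
  have := hL.eqOn_of_isPreconnected (hL'.add_intCast n) hS hy (by linarith) hx
  simp only at this
  linarith

lemma continuousOn (hL : IsLiftOn L u S) : ContinuousOn u S :=
  ((AddCircle.continuous_mk' 1).comp_continuousOn hL.1).congr fun x hx => (hL.2 x hx).symm

lemma exists_eqOn_add_intCast (hL : IsLiftOn L u S) {γ : Y → X} {T : Set Y}
    (hγ : ContinuousOn γ T) (hmaps : MapsTo γ T S) (hT : IsPreconnected T) {c : Y → ℝ}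
    (hc : IsLiftOn c (u ∘ γ) T) {t₀ : Y} (ht₀ : t₀ ∈ T) :
    ∃ n : ℤ, EqOn (fun t => L (γ t) + n) c T := by
  obtain ⟨n, hn⟩ := hc.exists_intCast_eq_sub (hL.comp hγ hmaps) ht₀
  exact ⟨n, ((hL.comp hγ hmaps).add_intCast n).eqOn_of_isPreconnected hc hT ht₀
    (by simp only [Function.comp_apply] at hn ⊢; linarith)⟩

end IsLiftOn

section Lifting

variable {X : Type*} [TopologicalSpace X] {u : X → 𝕋c}

lemma exists_isLiftOn_iUnion {ι : Type*} [Finite ι] {S : ι → Set X} (hS : ∀ i, IsClosed (S i))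
    {L : ι → X → ℝ} (hL : ∀ i, IsLiftOn (L i) u (S i))
    (hagree : ∀ i j, EqOn (L i) (L j) (S i ∩ S j)) : ∃ L', IsLiftOn L' u (⋃ i, S i) := by
  classical
  let L' : X → ℝ := fun x => if h : ∃ i, x ∈ S i then L h.choose x else 0
  have hL' : ∀ i, EqOn L' (L i) (S i) := fun i x hx => by
    have h : ∃ i, x ∈ S i := ⟨i, hx⟩
    simpa only [L', dif_pos h] using hagree _ i ⟨h.choose_spec, hx⟩
  refine ⟨L', (locallyFinite_of_finite S).continuousOn_iUnion hS
    fun i => (hL i).1.congr (hL' i), ?_⟩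
  intro x hx
  obtain ⟨i, hi⟩ := mem_iUnion.1 hx
  rw [hL' i hi, (hL i).2 x hi]

lemma abs_equivIco_lt_of_norm_lt {v : 𝕋c} (hv : ‖v‖ < 1 / 2) :
    |(AddCircle.equivIco 1 (-(1 / 2)) v : ℝ)| < 1 / 2 := by
  set r := AddCircle.equivIco 1 (-(1 / 2) : ℝ) v
  have hr : (r : ℝ) ∈ Ico (-(1 / 2) : ℝ) (-(1 / 2) + 1) := r.2
  have hrv : ((r : ℝ) : 𝕋c) = v := (AddCircle.equivIco 1 _).symm_apply_apply v
  have habs : |(r : ℝ)| ≤ |(1 : ℝ)| / 2 := by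
    rw [abs_le]; constructor <;> norm_num at hr ⊢ <;> linarith [hr.1, hr.2]
  rwa [← (AddCircle.norm_coe_eq_abs_iff 1 one_ne_zero).2 habs, hrv]

lemma exists_isLiftOn_of_norm_sub_lt {S : Set X} (hu : ContinuousOn u S) (θ : ℝ)
    (h : ∀ x ∈ S, ‖u x - θ‖ < 1 / 2) : ∃ L, IsLiftOn L u S ∧ ∀ x ∈ S, |L x - θ| < 1 / 2 := by
  -- the representative in `[-1/2, 1/2)` is continuous away from `-1/2`, which has norm `1/2`
  let rep : 𝕋c → ℝ := fun v => AddCircle.equivIco 1 (-(1 / 2)) v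
  have hrep : ∀ v : 𝕋c, ‖v‖ < 1 / 2 → ContinuousAt rep v := fun v hv => by
    refine continuous_subtype_val.continuousAt.comp (AddCircle.continuousAt_equivIco 1 _ ?_)
    rintro rfl
    norm_num at hv
  refine ⟨fun x => θ + rep (u x - θ), ⟨?_, fun x _ => ?_⟩, fun x hx => ?_⟩
  · exact continuousOn_const.add fun x hx => (hrep _ (h x hx)).comp_continuousWithinAt
      (f := fun y => u y - θ) ((hu x hx).sub continuousWithinAt_const)
  · have : ((rep (u x - θ) : ℝ) : 𝕋c) = u x - θ := (AddCircle.equivIco 1 _).symm_apply_apply _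
    rw [AddCircle.coe_add, this, add_sub_cancel]
  · simpa using abs_equivIco_lt_of_norm_lt (h x hx)

lemma exists_isLiftOn_Icc {c : ℝ → 𝕋c} (hc : ContinuousOn c (Icc 0 1)) :
    ∃ L, IsLiftOn L c (Icc 0 1) := by
  let γ : C(unitInterval, 𝕋c) :=
    ⟨fun t => c t, hc.comp_continuous continuous_subtype_val Subtype.prop⟩
  obtain ⟨e, he⟩ := QuotientAddGroup.mk_surjective (γ 0)
  obtain ⟨Γ, hΓ, -⟩ := (AddCircle.isCoveringMap_coe 1).exists_path_lifts γ e he.symm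
  refine ⟨IccExtend zero_le_one Γ, (continuous_IccExtend_iff.2 Γ.continuous).continuousOn,
    fun t ht => ?_⟩
  rw [IccExtend_of_mem _ _ ht]
  exact congrFun hΓ ⟨t, ht⟩

end Lifting

section Winding

variable {c c' : ℝ → 𝕋c} {k k' : ℤ}

lemma hasWinding_iff_exists_isLiftOn :
    HasWinding c k ↔ ∃ L, IsLiftOn L c (Icc 0 1) ∧ L 1 - L 0 = k :=
  exists_congr fun _ => and_assoc.symm

lemma IsLiftOn.hasWinding_iff {L : ℝ → ℝ} (hL : IsLiftOn L c (Icc 0 1)) :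
    HasWinding c k ↔ L 1 - L 0 = k := by
  refine ⟨fun h => ?_, fun hk => hasWinding_iff_exists_isLiftOn.2 ⟨L, hL, hk⟩⟩
  obtain ⟨L', hL', hk⟩ := hasWinding_iff_exists_isLiftOn.1 h
  have := hL.sub_eq_sub_of_isPreconnected hL' isPreconnected_Icc
    (right_mem_Icc.2 zero_le_one) (left_mem_Icc.2 zero_le_one)
  linarith

lemma exists_hasWinding (hc : ContinuousOn c (Icc 0 1)) (hloop : c 0 = c 1) :
    ∃ k, HasWinding c k := by
  obtain ⟨L, hL⟩ := exists_isLiftOn_Icc hc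
  obtain ⟨k, hk⟩ := exists_intCast_eq_sub_of_coe_eq <| (hL.2 1 (right_mem_Icc.2 zero_le_one)).trans
    (hloop.symm.trans (hL.2 0 (left_mem_Icc.2 zero_le_one)).symm)
  exact ⟨k, hL.hasWinding_iff.2 hk⟩

lemma HasWinding.congr (h : HasWinding c k) (hcc' : EqOn c c' (Icc 0 1)) : HasWinding c' k := by
  obtain ⟨L, hL, hk⟩ := hasWinding_iff_exists_isLiftOn.1 h
  exact hasWinding_iff_exists_isLiftOn.2 ⟨L, hL.congr hcc', hk⟩

lemma HasWinding.sub (h : HasWinding c k) (h' : HasWinding c' k') :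
    HasWinding (fun t => c t - c' t) (k - k') := by
  obtain ⟨L, hL, hk⟩ := hasWinding_iff_exists_isLiftOn.1 h
  obtain ⟨L', hL', hk'⟩ := hasWinding_iff_exists_isLiftOn.1 h'
  refine hasWinding_iff_exists_isLiftOn.2 ⟨_, hL.sub hL', ?_⟩
  push_cast
  linarith

/-- The difference of the loops lifts into `(-1/2, 1/2)`, so its increment is an integer of
absolute value less than `1`. -/
lemma HasWinding.of_norm_sub_lt (h : HasWinding c k) (hc' : ContinuousOn c' (Icc 0 1))
    (hloop' : c' 0 = c' 1) (hclose : ∀ t ∈ Icc (0 : ℝ) 1, ‖c' t - c t‖ < 1 / 2) :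
    HasWinding c' k := by
  obtain ⟨L, hL, hk⟩ := hasWinding_iff_exists_isLiftOn.1 h
  obtain ⟨U, hU, hUθ⟩ := exists_isLiftOn_of_norm_sub_lt (hc'.sub hL.continuousOn) 0
    (by simpa using hclose)
  have hL' : IsLiftOn (fun t => L t + U t) c' (Icc 0 1) :=
    (hL.add hU).congr fun t _ => add_sub_cancel (c t) (c' t)
  have h0 := left_mem_Icc.2 (zero_le_one' ℝ)
  have h1 := right_mem_Icc.2 (zero_le_one' ℝ)
  obtain ⟨m, hm⟩ := exists_intCast_eq_sub_of_coe_eq <|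
    (hL'.2 1 h1).trans (hloop'.symm.trans (hL'.2 0 h0).symm)
  have hmk : |((m - k : ℤ) : ℝ)| < 1 := by
    have := hUθ 1 h1; have := hUθ 0 h0
    rw [abs_lt] at *
    push_cast
    constructor <;> linarith
  rw [← Int.cast_abs, ← Int.cast_one, Int.cast_lt, Int.abs_lt_one_iff, sub_eq_zero] at hmk
  rw [hL'.hasWinding_iff, ← hmk, ← hm]

end Winding

/-- Loops at nearby times of the homotopy are uniformly close, so the winding number is locally
constant in time, hence constant on `[0, 1]`. -/
theorem hasWinding_iff_of_homotopy {G : ℝ × ℝ → 𝕋c} (hG : ContinuousOn G (Icc 0 1 ×ˢ Icc 0 1))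
    (hloop : ∀ s ∈ Icc (0 : ℝ) 1, G (s, 0) = G (s, 1)) (k : ℤ) :
    HasWinding (fun t => G (0, t)) k ↔ HasWinding (fun t => G (1, t)) k := by
  obtain ⟨δ, hδ, hclose⟩ := Metric.uniformContinuousOn_iff.1
    ((isCompact_Icc.prod isCompact_Icc).uniformContinuousOn_of_continuous hG) (1 / 2) (by norm_num)
  let P : ℝ → ℝ → Prop := fun s s' =>
    ∀ k, HasWinding (fun t => G (s, t)) k → HasWinding (fun t => G (s', t)) k
  have hnear : ∀ s ∈ Icc (0 : ℝ) 1, ∀ s' ∈ Icc (0 : ℝ) 1, dist s' s < δ → P s s' :=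
    fun s hs s' hs' hss k hk => hk.of_norm_sub_lt
      (hG.comp (continuousOn_const.prodMk continuousOn_id) fun t ht => ⟨hs', ht⟩) (hloop s' hs')
      fun t ht => by
        rw [← dist_eq_norm]
        exact hclose _ ⟨hs', ht⟩ _ ⟨hs, ht⟩ (by rwa [dist_prod_same_right])
  have hP : ∀ {s s'}, s ∈ Icc (0 : ℝ) 1 → s' ∈ Icc (0 : ℝ) 1 → P s s' := fun hs hs' =>
    isPreconnected_Icc.induction₂' P (fun s hs => by
        filter_upwards [self_mem_nhdsWithin,
          mem_nhdsWithin_of_mem_nhds (Metric.ball_mem_nhds s hδ)] with s' hs' hss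
        exact ⟨hnear s hs s' hs' hss, hnear s' hs' s hs (by rwa [dist_comm])⟩)
      (fun _ _ _ _ _ _ h h' k hk => h' k (h k hk)) hs hs'
  have h0 := left_mem_Icc.2 (zero_le_one' ℝ)
  have h1 := right_mem_Icc.2 (zero_le_one' ℝ)
  exact ⟨hP h0 h1 k, hP h1 h0 k⟩

theorem subset_closure_of_subset_iUnion_image {X ι : Type*} [PseudoMetricSpace X]
    {F : ι → X → X} {r : NNReal} (hF : ∀ i, LipschitzWith r (F i)) (hr : r < 1) {A B : Set X}
    (hA : Bornology.IsBounded A) (hAF : A ⊆ ⋃ i, F i '' A) (hB : B.Nonempty)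
    (hBF : ∀ i, MapsTo (F i) B B) : A ⊆ closure B := by
  obtain ⟨b, hb⟩ := hB
  obtain ⟨C, hC⟩ := hA.subset_closedBall b
  have approx : ∀ n : ℕ, ∀ x ∈ A, ∃ y ∈ B, dist x y ≤ r ^ n * C := by
    intro n
    induction n with
    | zero => exact fun x hx => ⟨b, hb, by simpa using hC hx⟩
    | succ n ih =>
      intro x hx
      obtain ⟨i, z, hz, rfl⟩ : ∃ i, ∃ z ∈ A, F i z = x := by simpa using hAF hx
      obtain ⟨y, hy, hzy⟩ := ih z hz
      refine ⟨F i y, hBF i hy, ?_⟩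
      calc dist (F i z) (F i y) ≤ r * dist z y := (hF i).dist_le_mul z y
        _ ≤ r * (r ^ n * C) := by gcongr
        _ = r ^ (n + 1) * C := by ring
  intro x hx
  rw [Metric.mem_closure_iff]
  intro ε hε
  have hlim := (tendsto_pow_atTop_nhds_zero_of_lt_one r.2 (mod_cast hr : (r : ℝ) < 1)).mul_const C
  rw [zero_mul] at hlim
  obtain ⟨n, hn⟩ := (hlim.eventually (gt_mem_nhds hε)).exists
  obtain ⟨y, hy, hxy⟩ := approx n x hx
  exact ⟨y, hy, hxy.trans_lt hn⟩

lemma sgF_sub_sgF (i : Fin 3) (x y : ℝ × ℝ) : sgF i x - sgF i y = (1 / 2 : ℝ) • (x - y) := by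
  simp only [sgF]
  module

lemma lipschitzWith_sgF (i : Fin 3) : LipschitzWith 2⁻¹ (sgF i) :=
  LipschitzWith.of_dist_le_mul fun x y => by
    rw [dist_eq_norm, dist_eq_norm, sgF_sub_sgF, norm_smul]
    norm_num

lemma leftInverse_sgF (i : Fin 3) : Function.LeftInverse (fun x => (2 : ℝ) • x - sgvtx i) (sgF i) :=
  fun x => by
    simp only [sgF]
    module

lemma sgFw_append_singleton (w : List (Fin 3)) (i : Fin 3) : sgFw (w ++ [i]) = sgFw w ∘ sgF i := by
  induction w with
  | nil => rfl
  | cons j w ih => exact congrArg (sgF j ∘ ·) ih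

lemma lipschitzWith_sgFw (w : List (Fin 3)) : LipschitzWith (2⁻¹ ^ w.length) (sgFw w) := by
  induction w with
  | nil => exact LipschitzWith.id
  | cons i w ih =>
    rw [List.length_cons, pow_succ']
    exact (lipschitzWith_sgF i).comp ih

lemma sgc0_eq_sgF_zero_of_le {t : ℝ} (ht : t ≤ 1 / 6) : sgc0 t = sgF 0 (sgc0 (2 * t)) := by
  unfold sgc0
  split_ifs <;> ext <;> simp [sgF, sgvtx, sgv1, sgv2, sgv3] <;>
    first | ring1 | linarith

lemma sgc0_eq_sgF_one_of_le {t : ℝ} (ht : t ≤ 1 / 2) : sgc0 t = sgF 1 (sgc0 (2 * t - 1 / 3)) := by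
  unfold sgc0
  split_ifs <;> ext <;> simp [sgF, sgvtx, sgv1, sgv2, sgv3] <;>
    first | ring1 | linarith

lemma sgc0_eq_sgF_two {t : ℝ} (ht₁ : 1 / 2 ≤ t) (ht₂ : t ≤ 5 / 6) :
    sgc0 t = sgF 2 (sgc0 (2 * t - 2 / 3)) := by
  unfold sgc0
  split_ifs <;> ext <;> simp [sgF, sgvtx, sgv1, sgv2, sgv3] <;>
    first | ring1 | linarith | nlinarith [Real.sqrt_nonneg 3]

lemma sgc0_eq_sgF_zero_of_ge {t : ℝ} (ht : 5 / 6 ≤ t) : sgc0 t = sgF 0 (sgc0 (2 * t - 1)) := by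
  unfold sgc0
  split_ifs <;> ext <;> simp [sgF, sgvtx, sgv1, sgv2, sgv3] <;>
    first | ring1 | linarith | nlinarith [Real.sqrt_nonneg 3]

structure IsSierpinskiGasket (K : Set (ℝ × ℝ)) : Prop where
  nonempty : K.Nonempty
  isCompact : IsCompact K
  eq_iUnion : K = ⋃ i : Fin 3, sgF i '' K

def sgTriangle : Set (ℝ × ℝ) :=
  {p | 0 ≤ p.2 ∧ p.2 ≤ √3 * p.1 ∧ p.2 ≤ √3 * (1 - p.1)}

lemma isClosed_sgTriangle : IsClosed sgTriangle :=
  (isClosed_le continuous_const continuous_snd).inter <|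
    (isClosed_le continuous_snd (by fun_prop)).inter (isClosed_le continuous_snd (by fun_prop))

lemma mapsTo_sgF_sgTriangle (i : Fin 3) : MapsTo (sgF i) sgTriangle sgTriangle := by
  rintro p ⟨h₁, h₂, h₃⟩
  have := Real.sqrt_nonneg 3
  fin_cases i <;> simp [sgTriangle, sgF, sgvtx, sgv1, sgv2, sgv3] <;>
    refine ⟨?_, ?_, ?_⟩ <;> nlinarith

/-- `z - z' = v_j - v_i` with `z, z' ∈ T` pins `z` and `z'` to the endpoints of an edge of `T`. -/
lemma eq_sgvtx_of_sgF_eq_sgF {i j : Fin 3} (hij : i ≠ j) {z z' : ℝ × ℝ} (hz : z ∈ sgTriangle)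
    (hz' : z' ∈ sgTriangle) (h : sgF i z = sgF j z') : z = sgvtx j := by
  have e : z - z' = sgvtx j - sgvtx i := by
    simp only [sgF] at h
    linear_combination (norm := module) (2 : ℝ) • h
  have e₁ := congrArg Prod.fst e
  have e₂ := congrArg Prod.snd e
  obtain ⟨a₁, a₂, a₃⟩ := hz
  obtain ⟨b₁, b₂, b₃⟩ := hz'
  have := Real.sqrt_pos.2 (by norm_num : (0 : ℝ) < 3)
  fin_cases i <;> fin_cases j <;> simp [sgvtx, sgv1, sgv2, sgv3, Prod.ext_iff] at e₁ e₂ hij ⊢ <;>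
    constructor <;> nlinarith

lemma continuous_sgc0 : Continuous sgc0 := by
  refine Continuous.if_le (by fun_prop) (Continuous.if_le (by fun_prop) (by fun_prop)
    continuous_id continuous_const fun t ht => ?_) continuous_id continuous_const fun t ht => ?_ <;>
    · subst ht; norm_num

lemma continuous_sgcw (w : List (Fin 3)) : Continuous (sgcw w) :=
  (lipschitzWith_sgFw w).continuous.comp continuous_sgc0

lemma sgc0_zero_eq_one : sgc0 0 = sgc0 1 := by
  norm_num [sgc0]

lemma mapsTo_sgc0_Icc_zero_oneSixth :
    MapsTo sgc0 (Icc 0 (1 / 6)) (sgF 0 '' (sgc0 '' Icc 0 1)) := fun t ht =>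
  ⟨sgc0 (2 * t), mem_image_of_mem _ ⟨by linarith [ht.1], by linarith [ht.2]⟩,
    (sgc0_eq_sgF_zero_of_le ht.2).symm⟩

lemma mapsTo_sgc0_Icc_oneSixth_half :
    MapsTo sgc0 (Icc (1 / 6) (1 / 2)) (sgF 1 '' (sgc0 '' Icc 0 1)) := fun t ht =>
  ⟨sgc0 (2 * t - 1 / 3), mem_image_of_mem _ ⟨by linarith [ht.1], by linarith [ht.2]⟩,
    (sgc0_eq_sgF_one_of_le ht.2).symm⟩

lemma mapsTo_sgc0_Icc_half_fiveSixths :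
    MapsTo sgc0 (Icc (1 / 2) (5 / 6)) (sgF 2 '' (sgc0 '' Icc 0 1)) := fun t ht =>
  ⟨sgc0 (2 * t - 2 / 3), mem_image_of_mem _ ⟨by linarith [ht.1], by linarith [ht.2]⟩,
    (sgc0_eq_sgF_two ht.1 ht.2).symm⟩

lemma mapsTo_sgc0_Icc_fiveSixths_one :
    MapsTo sgc0 (Icc (5 / 6) 1) (sgF 0 '' (sgc0 '' Icc 0 1)) := fun t ht =>
  ⟨sgc0 (2 * t - 1), mem_image_of_mem _ ⟨by linarith [ht.1], by linarith [ht.2]⟩,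
    (sgc0_eq_sgF_zero_of_ge ht.1).symm⟩

namespace IsSierpinskiGasket

variable {K : Set (ℝ × ℝ)} (hK : IsSierpinskiGasket K)
include hK

lemma mapsTo_sgF (i : Fin 3) : MapsTo (sgF i) K K := fun x hx => by
  rw [hK.eq_iUnion]
  exact mem_iUnion.2 ⟨i, mem_image_of_mem _ hx⟩

lemma mapsTo_sgFw (w : List (Fin 3)) : MapsTo (sgFw w) K K := by
  induction w with
  | nil => exact mapsTo_id K
  | cons i w ih => exact (hK.mapsTo_sgF i).comp ih

lemma isClosed_image_sgF (i : Fin 3) : IsClosed (sgF i '' K) :=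
  (hK.isCompact.image (lipschitzWith_sgF i).continuous).isClosed

lemma subset_of_subset_iUnion_image {A : Set (ℝ × ℝ)} (hA : Bornology.IsBounded A)
    (hAF : A ⊆ ⋃ i, sgF i '' A) : A ⊆ K :=
  hK.isCompact.isClosed.closure_eq ▸ subset_closure_of_subset_iUnion_image lipschitzWith_sgF
    (by norm_num) hA hAF hK.nonempty hK.mapsTo_sgF

lemma subset_of_mapsTo {S : Set (ℝ × ℝ)} (hS : IsClosed S) (hSne : S.Nonempty)
    (hSF : ∀ i, MapsTo (sgF i) S S) : K ⊆ S :=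
  hS.closure_eq ▸ subset_closure_of_subset_iUnion_image lipschitzWith_sgF (by norm_num)
    hK.isCompact.isBounded hK.eq_iUnion.subset hSne hSF

lemma image_sgc0_subset : sgc0 '' Icc 0 1 ⊆ K := by
  refine hK.subset_of_subset_iUnion_image (isCompact_Icc.image continuous_sgc0).isBounded ?_
  rintro _ ⟨t, ht, rfl⟩
  simp only [mem_iUnion]
  rcases le_total t (1 / 6) with h₁ | h₁
  · exact ⟨0, mapsTo_sgc0_Icc_zero_oneSixth ⟨ht.1, h₁⟩⟩
  rcases le_total t (1 / 2) with h₂ | h₂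
  · exact ⟨1, mapsTo_sgc0_Icc_oneSixth_half ⟨h₁, h₂⟩⟩
  rcases le_total t (5 / 6) with h₃ | h₃
  · exact ⟨2, mapsTo_sgc0_Icc_half_fiveSixths ⟨h₂, h₃⟩⟩
  · exact ⟨0, mapsTo_sgc0_Icc_fiveSixths_one ⟨h₃, ht.2⟩⟩

lemma mapsTo_sgcw (w : List (Fin 3)) : MapsTo (sgcw w) (Icc 0 1) K :=
  (hK.mapsTo_sgFw w).comp fun _ ht => hK.image_sgc0_subset (mem_image_of_mem _ ht)

lemma subsingleton_image_sgF_inter {i j : Fin 3} (hij : i ≠ j) :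
    (sgF i '' K ∩ sgF j '' K).Subsingleton := by
  have hK_sub : K ⊆ sgTriangle := hK.subset_of_mapsTo isClosed_sgTriangle
    ⟨sgv1, by simp [sgTriangle, sgv1]⟩ mapsTo_sgF_sgTriangle
  have junction : ∀ x ∈ sgF i '' K ∩ sgF j '' K, x = sgF i (sgvtx j) := by
    rintro _ ⟨⟨z, hz, rfl⟩, z', hz', hzz'⟩
    rw [eq_sgvtx_of_sgF_eq_sgF hij (hK_sub hz) (hK_sub hz') hzz'.symm]
  exact fun x hx y hy => (junction x hx).trans (junction y hy).symm

lemma mapsTo_sgc0_of_mapsTo {i : Fin 3} {a b : ℝ}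
    (h : MapsTo sgc0 (Icc a b) (sgF i '' (sgc0 '' Icc 0 1))) : MapsTo sgc0 (Icc a b) (sgF i '' K) :=
  h.mono_right (image_mono hK.image_sgc0_subset)

/-- `sgc0 (1/6)`, `sgc0 (1/2)` and `sgc0 (5/6)` are the points where two of the cells `F_i(K)`
meet. -/
lemma exists_isLiftOn_of_agree_at_junctions {φ : ℝ × ℝ → 𝕋c} {μ : Fin 3 → ℝ × ℝ → ℝ}
    (hμ : ∀ i, IsLiftOn (μ i) φ (sgF i '' K)) (h₀₁ : μ 0 (sgc0 (1 / 6)) = μ 1 (sgc0 (1 / 6)))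
    (h₁₂ : μ 1 (sgc0 (1 / 2)) = μ 2 (sgc0 (1 / 2)))
    (h₂₀ : μ 2 (sgc0 (5 / 6)) = μ 0 (sgc0 (5 / 6))) : ∃ L, IsLiftOn L φ K := by
  have j₀₁ : ∃ p ∈ sgF 0 '' K ∩ sgF 1 '' K, μ 0 p = μ 1 p :=
    ⟨_, ⟨hK.mapsTo_sgc0_of_mapsTo mapsTo_sgc0_Icc_zero_oneSixth (by norm_num),
      hK.mapsTo_sgc0_of_mapsTo mapsTo_sgc0_Icc_oneSixth_half (by norm_num)⟩, h₀₁⟩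
  have j₁₂ : ∃ p ∈ sgF 1 '' K ∩ sgF 2 '' K, μ 1 p = μ 2 p :=
    ⟨_, ⟨hK.mapsTo_sgc0_of_mapsTo mapsTo_sgc0_Icc_oneSixth_half (by norm_num),
      hK.mapsTo_sgc0_of_mapsTo mapsTo_sgc0_Icc_half_fiveSixths (by norm_num)⟩, h₁₂⟩
  have j₂₀ : ∃ p ∈ sgF 2 '' K ∩ sgF 0 '' K, μ 2 p = μ 0 p :=
    ⟨_, ⟨hK.mapsTo_sgc0_of_mapsTo mapsTo_sgc0_Icc_half_fiveSixths (by norm_num),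
      hK.mapsTo_sgc0_of_mapsTo mapsTo_sgc0_Icc_fiveSixths_one (by norm_num)⟩, h₂₀⟩
  have swap : ∀ {A B : Set (ℝ × ℝ)} {f g : ℝ × ℝ → ℝ}, (∃ p ∈ A ∩ B, f p = g p) →
      ∃ p ∈ B ∩ A, g p = f p := fun ⟨p, ⟨hA, hB⟩, h⟩ => ⟨p, ⟨hB, hA⟩, h.symm⟩
  have junction : ∀ i j, i ≠ j → ∃ p ∈ sgF i '' K ∩ sgF j '' K, μ i p = μ j p := by
    intro i j hij
    fin_cases i <;> fin_cases j
    all_goals first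
      | exact absurd rfl hij
      | exact j₀₁ | exact j₁₂ | exact j₂₀
      | exact swap j₀₁ | exact swap j₁₂ | exact swap j₂₀
  refine hK.eq_iUnion ▸ exists_isLiftOn_iUnion hK.isClosed_image_sgF hμ fun i j => ?_
  rcases eq_or_ne i j with rfl | hij
  · exact fun _ _ => rfl
  obtain ⟨p, hp, hpij⟩ := junction i j hij
  exact fun x hx => hK.subsingleton_image_sgF_inter hij hx hp ▸ hpij

/-- The inductive step: lifts on the three cells can be shifted by integers so as to agree with a
lift `c` of the boundary loop of `K` on the arcs it spends in each cell; the two arcs in `F_0(K)`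
are then matched because `c 1 = c 0`, i.e. because the winding number is `0`. -/
theorem exists_isLiftOn_of_forall_sgF {φ : ℝ × ℝ → 𝕋c}
    (hcells : ∀ i, ∃ L, IsLiftOn L (φ ∘ sgF i) K) (hw : HasWinding (φ ∘ sgc0) 0) :
    ∃ L, IsLiftOn L φ K := by
  obtain ⟨c, hc, hc₀₁⟩ := hasWinding_iff_exists_isLiftOn.1 hw
  rw [Int.cast_zero, sub_eq_zero] at hc₀₁
  have hmatch : ∀ {i a b}, 0 ≤ a → a ≤ b → b ≤ 1 →
      MapsTo sgc0 (Icc a b) (sgF i '' (sgc0 '' Icc 0 1)) →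
      ∃ μ, IsLiftOn μ φ (sgF i '' K) ∧ EqOn (μ ∘ sgc0) c (Icc a b) := by
    intro i a b h₀ hab h₁ h
    obtain ⟨L, hL⟩ := hcells i
    have hL' := hL.image_of_leftInverse (by fun_prop) (leftInverse_sgF i)
    obtain ⟨n, hn⟩ := hL'.exists_eqOn_add_intCast continuous_sgc0.continuousOn
      (hK.mapsTo_sgc0_of_mapsTo h) isPreconnected_Icc (hc.mono (Icc_subset_Icc h₀ h₁))
      (left_mem_Icc.2 hab)
    exact ⟨_, hL'.add_intCast n, hn⟩
  obtain ⟨μ₀, hμ₀, hμc₀⟩ := hmatch (by norm_num) (by norm_num) (by norm_num)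
    mapsTo_sgc0_Icc_zero_oneSixth
  obtain ⟨μ₁, hμ₁, hμc₁⟩ := hmatch (by norm_num) (by norm_num) (by norm_num)
    mapsTo_sgc0_Icc_oneSixth_half
  obtain ⟨μ₂, hμ₂, hμc₂⟩ := hmatch (by norm_num) (by norm_num) (by norm_num)
    mapsTo_sgc0_Icc_half_fiveSixths
  have hμc₀' : EqOn (μ₀ ∘ sgc0) c (Icc (5 / 6) 1) :=
    (hμ₀.comp continuous_sgc0.continuousOn
      (hK.mapsTo_sgc0_of_mapsTo mapsTo_sgc0_Icc_fiveSixths_one)).eqOn_of_isPreconnected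
      (hc.mono (Icc_subset_Icc (by norm_num) le_rfl)) isPreconnected_Icc
      (right_mem_Icc.2 (by norm_num)) <| by
        have := hμc₀ (left_mem_Icc.2 (by norm_num))
        simp only [Function.comp_apply, ← sgc0_zero_eq_one] at this ⊢
        rw [this, hc₀₁]
  refine hK.exists_isLiftOn_of_agree_at_junctions (μ := ![μ₀, μ₁, μ₂])
    (fun i => by fin_cases i <;> assumption) ?_ ?_ ?_
  · exact (hμc₀ (by norm_num)).trans (hμc₁ (by norm_num)).symm
  · exact (hμc₁ (by norm_num)).trans (hμc₂ (by norm_num)).symm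
  · exact (hμc₂ (by norm_num)).trans (hμc₀' (by norm_num)).symm

/-- By uniform continuity, `h` oscillates by less than `1/2` on all sufficiently small cells. -/
lemma exists_forall_isLiftOn_comp_sgFw {h : ℝ × ℝ → 𝕋c} (hh : ContinuousOn h K) :
    ∃ n, ∀ w : List (Fin 3), n ≤ w.length → ∃ L, IsLiftOn L (h ∘ sgFw w) K := by
  obtain ⟨δ, hδ, hclose⟩ := Metric.uniformContinuousOn_iff.1
    (hK.isCompact.uniformContinuousOn_of_continuous hh) (1 / 2) (by norm_num)
  have hlim := (tendsto_pow_atTop_nhds_zero_of_lt_one (by norm_num : (0 : ℝ) ≤ 2⁻¹)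
    (by norm_num)).mul_const (Metric.diam K)
  rw [zero_mul] at hlim
  obtain ⟨n, hn⟩ := eventually_atTop.1 (hlim.eventually (gt_mem_nhds hδ))
  refine ⟨n, fun w hw => ?_⟩
  obtain ⟨x₀, hx₀⟩ := hK.nonempty
  obtain ⟨θ, hθ⟩ := QuotientAddGroup.mk_surjective (h (sgFw w x₀))
  obtain ⟨L, hL, -⟩ := exists_isLiftOn_of_norm_sub_lt
    (hh.comp (lipschitzWith_sgFw w).continuous.continuousOn (hK.mapsTo_sgFw w)) θ fun x hx => by
      rw [Function.comp_apply, hθ, ← dist_eq_norm]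
      refine hclose _ (hK.mapsTo_sgFw w hx) _ (hK.mapsTo_sgFw w hx₀) ?_
      calc dist (sgFw w x) (sgFw w x₀) ≤ 2⁻¹ ^ w.length * dist x x₀ := by
            simpa using (lipschitzWith_sgFw w).dist_le_mul x x₀
        _ ≤ 2⁻¹ ^ w.length * Metric.diam K := by
            gcongr; exact Metric.dist_le_diam_of_mem hK.isCompact.isBounded hx hx₀
        _ < δ := hn _ hw
  exact ⟨L, hL⟩

theorem exists_isLiftOn_of_forall_hasWinding_zero {h : ℝ × ℝ → 𝕋c} (hh : ContinuousOn h K)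
    (hw : ∀ w, HasWinding (fun t => h (sgcw w t)) 0) : ∃ L, IsLiftOn L h K := by
  obtain ⟨n, hn⟩ := hK.exists_forall_isLiftOn_comp_sgFw hh
  have hcells : ∀ j w, n ≤ w.length + j → ∃ L, IsLiftOn L (h ∘ sgFw w) K := by
    intro j
    induction j with
    | zero => exact hn
    | succ j ih =>
      refine fun w hw' => hK.exists_isLiftOn_of_forall_sgF (fun i => ?_) (hw w)
      rw [Function.comp_assoc, ← sgFw_append_singleton]
      exact ih _ (by simp only [List.length_append, List.length_singleton]; omega)
  simpa [sgFw] using hcells n [] (by simp)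

lemma hasWinding_comp_sgcw_iff_of_homotopy {f g : ℝ × ℝ → 𝕋c}
    {F : ℝ × (ℝ × ℝ) → 𝕋c} (hF : ContinuousOn F (Icc 0 1 ×ˢ K)) (hF₀ : ∀ x ∈ K, F (0, x) = f x)
    (hF₁ : ∀ x ∈ K, F (1, x) = g x) (w : List (Fin 3)) (k : ℤ) :
    HasWinding (fun t => f (sgcw w t)) k ↔ HasWinding (fun t => g (sgcw w t)) k := by
  have hG : ContinuousOn (fun p : ℝ × ℝ => F (p.1, sgcw w p.2)) (Icc 0 1 ×ˢ Icc 0 1) :=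
    hF.comp (continuousOn_fst.prodMk ((continuous_sgcw w).comp_continuousOn continuousOn_snd))
      fun p hp => ⟨hp.1, hK.mapsTo_sgcw w hp.2⟩
  have e₀ : EqOn (fun t => F (0, sgcw w t)) (fun t => f (sgcw w t)) (Icc 0 1) :=
    fun t ht => hF₀ _ (hK.mapsTo_sgcw w ht)
  have e₁ : EqOn (fun t => F (1, sgcw w t)) (fun t => g (sgcw w t)) (Icc 0 1) :=
    fun t ht => hF₁ _ (hK.mapsTo_sgcw w ht)
  have h := hasWinding_iff_of_homotopy hG
    (fun s _ => congrArg (fun x => F (s, x)) (congrArg (sgFw w) sgc0_zero_eq_one)) k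
  exact ⟨fun hf => (h.1 (hf.congr e₀.symm)).congr e₁, fun hg => (h.2 (hg.congr e₁.symm)).congr e₀⟩

lemma exists_homotopy_of_hasWinding_iff {f g : ℝ × ℝ → 𝕋c} (hf : ContinuousOn f K)
    (hg : ContinuousOn g K) (hwind : ∀ (w : List (Fin 3)) (k : ℤ),
      HasWinding (fun t => f (sgcw w t)) k ↔ HasWinding (fun t => g (sgcw w t)) k) :
    ∃ F : ℝ × (ℝ × ℝ) → 𝕋c, ContinuousOn F (Icc 0 1 ×ˢ K) ∧
      (∀ x ∈ K, F (0, x) = f x) ∧ (∀ x ∈ K, F (1, x) = g x) := by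
  obtain ⟨H, hH⟩ := hK.exists_isLiftOn_of_forall_hasWinding_zero (hg.sub hf) fun w => by
    obtain ⟨k, hk⟩ := exists_hasWinding (hf.comp (continuous_sgcw w).continuousOn
      (hK.mapsTo_sgcw w)) (congrArg (f ∘ sgFw w) sgc0_zero_eq_one)
    simpa using ((hwind w k).1 hk).sub hk
  refine ⟨fun p => f p.2 + ((p.1 * H p.2 : ℝ) : 𝕋c), ?_, fun x _ => by simp,
    fun x hx => by simp [hH.2 x hx]⟩
  exact (hf.comp continuousOn_snd fun p hp => hp.2).add <|
    (AddCircle.continuous_mk' 1).comp_continuousOn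
      (continuousOn_fst.mul (hH.1.comp continuousOn_snd fun p hp => hp.2))

end IsSierpinskiGasket

/-- Theorem 2.4 of [MM2024]. Two continuous maps `f, g` from the
Sierpinski gasket `K` to the circle `𝕋` are homotopic if and only if, for every
word `w`, the winding numbers of `f ∘ c_w` and `g ∘ c_w` agree. -/
theorem statement0
    (K : Set (ℝ × ℝ)) (hKne : K.Nonempty) (hKcpt : IsCompact K)
    (hKfix : K = ⋃ i : Fin 3, sgF i '' K)
    (f g : ℝ × ℝ → 𝕋c) (hf : ContinuousOn f K) (hg : ContinuousOn g K) :
    (∃ F : ℝ × (ℝ × ℝ) → 𝕋c,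
        ContinuousOn F (Set.Icc (0:ℝ) 1 ×ˢ K) ∧
        (∀ x ∈ K, F (0, x) = f x) ∧ (∀ x ∈ K, F (1, x) = g x)) ↔
      (∀ (w : List (Fin 3)) (k : ℤ),
        HasWinding (fun t => f (sgcw w t)) k ↔ HasWinding (fun t => g (sgcw w t)) k) := by
  have hK : IsSierpinskiGasket K := ⟨hKne, hKcpt, hKfix⟩
  constructor
  · rintro ⟨F, hF, hF₀, hF₁⟩
    exact hK.hasWinding_comp_sgcw_iff_of_homotopy hF hF₀ hF₁
  · exact hK.exists_homotopy_of_hasWinding_iff hf hg
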